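/- arXiv:1303.0499 — 5 statements merged into one kernel-verified Lean document; each statement's English description precedes it below -/
import Mathlib

section
/- Let w be analytic on the open unit disk 𝔻 with w(0)=0. If |w| attains its maximum over the closed disk {z : |z| ≤ r} (for some 0 < r < 1) at a point z₀ with |z₀| = r, then z₀·w'(z₀) = k·w(z₀) for some real number k ≥ 1. -/
/-!
Put `B = w z₀` and `A = z₀ w'(z₀)`; it suffices that `A * conj B` is real and at least `|B|²`,
for then `k = Re (A conj B) / |B|²` works (if `B = 0`, `w` vanishes on the closed disk and
`w'(z₀) = 0`). Along the circle `θ ↦ z₀ e^{iθ}`, `|w|²` is maximal at `θ = 0`, and its derivative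
there is `-2 Im (A conj B)`. Along the radius, the Schwarz lemma gives `|w(t z₀)| ≤ t |B|`
for `0 < t < 1`, with equality at `t = 1`; comparing derivatives of `|w(t z₀)|²` and `t² |B|²`
at `t = 1` yields `Re (A conj B) ≥ |B|²`.
-/

open Complex Metric ComplexConjugate Set

lemma deriv_eq_zero_of_eqOn_zero {𝕜 F : Type*} [NontriviallyNormedField 𝕜] [NormedAddCommGroup F]
    [NormedSpace 𝕜 F] {f : 𝕜 → F} {s : Set 𝕜} {x : 𝕜} (hf : DifferentiableAt 𝕜 f x)
    (hs : UniqueDiffWithinAt 𝕜 s x) (hfs : EqOn f 0 s) (hx : x ∈ s) : deriv f x = 0 :=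
  hs.eq_deriv s hf.hasDerivAt.hasDerivWithinAt
    ((hasDerivWithinAt_const x s 0).congr hfs (hfs hx))

lemma exists_one_le_real_mul_eq_of_mul_conj {A B : ℂ} (hB : B ≠ 0) (him : (A * conj B).im = 0)
    (hre : ‖B‖ ^ 2 ≤ (A * conj B).re) : ∃ k : ℝ, 1 ≤ k ∧ A = k * B := by
  have hB2 : 0 < ‖B‖ ^ 2 := by positivity
  refine ⟨(A * conj B).re / ‖B‖ ^ 2, (one_le_div hB2).2 hre, ?_⟩
  have hreal : A * conj B = ((A * conj B).re : ℂ) := Complex.ext (by simp) (by simp [him])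
  have hBB : conj B * B = (‖B‖ ^ 2 : ℝ) := by push_cast; exact conj_mul' B
  rw [ofReal_div, div_mul_eq_mul_div, eq_div_iff (by exact_mod_cast hB2.ne'), ← hreal,
    mul_assoc, hBB]

section

variable {w : ℂ → ℂ} {z₀ : ℂ}

lemma norm_apply_ofReal_mul_le (hw : DifferentiableOn ℂ w (ball 0 ‖z₀‖)) (hw0 : w 0 = 0)
    (hmax : IsMaxOn (‖w ·‖) (ball 0 ‖z₀‖) z₀) (hz₀ : z₀ ≠ 0) {t : ℝ} (ht : t ∈ Ioo 0 1) :
    ‖w (t * z₀)‖ ≤ t * ‖w z₀‖ := by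
  have hnorm : ‖(t : ℂ) * z₀‖ = t * ‖z₀‖ := by simp [abs_of_pos ht.1]
  have hmem : (t : ℂ) * z₀ ∈ ball 0 ‖z₀‖ := by
    rw [mem_ball_zero_iff, hnorm]
    exact mul_lt_of_lt_one_left (norm_pos_iff.2 hz₀) ht.2
  have hschwarz := Complex.dist_le_div_mul_dist_of_mapsTo_ball hw
    (fun z hz => by simpa [hw0] using hmax hz) hmem
  rw [hw0, dist_zero_right, dist_zero_right, hnorm] at hschwarz
  calc ‖w (t * z₀)‖ ≤ ‖w z₀‖ / ‖z₀‖ * (t * ‖z₀‖) := hschwarz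
    _ = t * ‖w z₀‖ := by field_simp [norm_ne_zero_iff.2 hz₀]

lemma im_mul_deriv_mul_conj_eq_zero_of_isMaxOn_sphere (hw : DifferentiableAt ℂ w z₀)
    (hmax : IsMaxOn (‖w ·‖) (sphere 0 ‖z₀‖) z₀) :
    (z₀ * deriv w z₀ * conj (w z₀)).im = 0 := by
  have hcircle : HasDerivAt (fun θ : ℝ => z₀ * exp (θ * I)) (z₀ * I) 0 := by
    simpa using ((hasDerivAt_id (0 : ℝ)).ofReal_comp.mul_const I).cexp.const_mul z₀
  have hwcircle : HasDerivAt (fun θ : ℝ => w (z₀ * exp (θ * I))) (deriv w z₀ * (z₀ * I)) 0 := by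
    refine HasDerivAt.comp (0 : ℝ) ?_ hcircle
    simpa using hw.hasDerivAt
  have hlocal : IsLocalMax (fun θ : ℝ => ‖w (z₀ * exp (θ * I))‖ ^ 2) 0 :=
    Filter.Eventually.of_forall fun θ => by
      simpa using pow_le_pow_left₀ (norm_nonneg _)
        (hmax (by simp [norm_exp_ofReal_mul_I] : z₀ * exp (θ * I) ∈ sphere 0 ‖z₀‖)) 2
  have hzero := hlocal.hasDerivAt_eq_zero hwcircle.norm_sq
  rw [ofReal_zero, zero_mul, exp_zero, mul_one, Complex.inner,
    show deriv w z₀ * (z₀ * I) * conj (w z₀) = z₀ * deriv w z₀ * conj (w z₀) * I by ring,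
    mul_I_re] at hzero
  linarith

lemma norm_sq_le_re_mul_deriv_mul_conj_of_radial_bound (hw : DifferentiableAt ℂ w z₀)
    (hbound : ∀ t ∈ Ioo (0 : ℝ) 1, ‖w (t * z₀)‖ ≤ t * ‖w z₀‖) :
    ‖w z₀‖ ^ 2 ≤ (z₀ * deriv w z₀ * conj (w z₀)).re := by
  have hradius : HasDerivAt (fun t : ℝ => w (t * z₀)) (deriv w z₀ * z₀) 1 := by
    refine HasDerivAt.comp (1 : ℝ) ?_ ?_
    · simpa using hw.hasDerivAt
    · simpa using (hasDerivAt_id (1 : ℝ)).ofReal_comp.mul_const z₀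
  have hgap : HasDerivAt (fun t : ℝ => ‖w (t * z₀)‖ ^ 2 - ‖w z₀‖ ^ 2 * t ^ 2)
      (2 * (z₀ * deriv w z₀ * conj (w z₀)).re - 2 * ‖w z₀‖ ^ 2) 1 := by
    refine (hradius.norm_sq.sub ((hasDerivAt_pow 2 (1 : ℝ)).const_mul _)).congr_deriv ?_
    rw [ofReal_one, one_mul, Complex.inner, mul_comm (deriv w z₀) z₀]
    push_cast
    ring
  have hmax : IsLocalMaxOn (fun t : ℝ => ‖w (t * z₀)‖ ^ 2 - ‖w z₀‖ ^ 2 * t ^ 2) (Ioc 0 1) 1 := by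
    refine Filter.eventually_of_mem self_mem_nhdsWithin fun t ht => ?_
    rcases ht.2.eq_or_lt with rfl | hlt
    · simp
    · have := pow_le_pow_left₀ (norm_nonneg _) (hbound t ⟨ht.1, hlt⟩) 2
      simp only [ofReal_one, one_mul, one_pow, mul_one, sub_self]
      nlinarith
  have hinward : (1 / 2 - 1 : ℝ) ∈ posTangentConeAt (Ioc 0 1) (1 : ℝ) := by
    refine sub_mem_posTangentConeAt_of_segment_subset ?_
    rw [segment_symm, segment_eq_Icc (by norm_num)]
    exact Icc_subset_Ioc (by norm_num) le_rfl
  have hnonpos := hmax.hasFDerivWithinAt_nonpos hgap.hasFDerivAt.hasFDerivWithinAt hinward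
  simp only [ContinuousLinearMap.toSpanSingleton_apply, smul_eq_mul] at hnonpos
  linarith

end

theorem jack_lemma (w : ℂ → ℂ)
    (hw : DifferentiableOn ℂ w (ball (0:ℂ) 1))
    (hw0 : w 0 = 0) (r : ℝ) (hr0 : 0 < r) (hr1 : r < 1)
    (z₀ : ℂ) (hz₀ : ‖z₀‖ = r)
    (hmax : ∀ z : ℂ, ‖z‖ ≤ r → ‖w z‖ ≤ ‖w z₀‖) :
    ∃ k : ℝ, 1 ≤ k ∧ z₀ * deriv w z₀ = (k : ℂ) * w z₀ := by
  have hz₀ne : z₀ ≠ 0 := norm_pos_iff.1 (hz₀ ▸ hr0)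
  have hdiff : DifferentiableAt ℂ w z₀ :=
    hw.differentiableAt (isOpen_ball.mem_nhds (by simpa [hz₀] using hr1))
  by_cases hB : w z₀ = 0
  · have hvanish : EqOn w 0 (closedBall 0 r) := fun z hz =>
      norm_le_zero_iff.1 (by simpa [hB] using hmax z (mem_closedBall_zero_iff.1 hz))
    have hunique : UniqueDiffWithinAt ℂ (closedBall 0 r) z₀ :=
      uniqueDiffWithinAt_convex_of_isRCLikeNormedField (convex_closedBall 0 r)
        ((nonempty_ball.2 hr0).mono ball_subset_interior_closedBall)
        (subset_closure (by simp [hz₀]))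
    refine ⟨1, le_rfl, ?_⟩
    rw [deriv_eq_zero_of_eqOn_zero hdiff hunique hvanish (by simp [hz₀]), hB, mul_zero, mul_zero]
  subst hz₀
  exact exists_one_le_real_mul_eq_of_mul_conj hB
    (im_mul_deriv_mul_conj_eq_zero_of_isMaxOn_sphere hdiff fun z hz =>
      hmax z (mem_sphere_zero_iff_norm.1 hz).le)
    (norm_sq_le_re_mul_deriv_mul_conj_of_radial_bound hdiff fun t ht =>
      norm_apply_ofReal_mul_le (hw.mono (ball_subset_ball hr1.le)) hw0
        (fun z hz => hmax z (mem_ball_zero_iff.1 hz).le) hz₀ne ht)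
end

section
/- Let f be analytic on the open unit disk 𝔻 with f(0)=0 and f'(0)=1. Suppose there exist real numbers β ≥ 0, γ ≥ 0 and δ > -1/2 such that for all z ∈ 𝔻, |f'(z) - 1|^β · |δ + z·f''(z)/f'(z)|^γ < ((1+2δ)/2)^γ (with f'(z) ≠ 0 wherever the quotient appears). Then |f'(z) - 1| < 1 for all z ∈ 𝔻. -/
/-!
Put `w = f' - 1`, so `w 0 = 0`. If `‖w‖ < 1` fails somewhere, a point `z₁` of least modulus with
`‖w z₁‖ = 1` maximises `‖w‖` on the closed disk of radius `‖z₁‖`. Jack's lemma gives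
`z₁ w'(z₁) = k w(z₁)` with `k ≥ 1` real. Since `‖w z₁‖ = 1`, `Re (w / (1 + w)) = 1/2` at `z₁`, so
`Re (δ + z₁ f''(z₁) / f'(z₁)) = δ + k/2 ≥ (1 + 2δ)/2 > 0`, which contradicts the hypothesis at `z₁`.
-/

open Complex Metric Set

theorem exists_isMaxOn_closedBall_eq_of_le {E : Type*} [NormedAddCommGroup E] [NormedSpace ℝ E]
    [ProperSpace E] {u : E → ℝ} {R c : ℝ} (hu : ContinuousOn u (ball 0 R)) (hu0 : u 0 < c)
    {z₀ : E} (hz₀ : z₀ ∈ ball 0 R) (hcz₀ : c ≤ u z₀) :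
    ∃ z₁ ∈ ball 0 R, u z₁ = c ∧ IsMaxOn u (closedBall 0 ‖z₁‖) z₁ := by
  have hsub : closedBall (0 : E) ‖z₀‖ ⊆ ball 0 R := closedBall_subset_ball (mem_ball_zero_iff.mp hz₀)
  have hK : IsCompact (closedBall (0 : E) ‖z₀‖ ∩ u ⁻¹' Ici c) :=
    (isCompact_closedBall 0 ‖z₀‖).of_isClosed_subset
      ((hu.mono hsub).preimage_isClosed_of_isClosed isClosed_closedBall isClosed_Ici)
      inter_subset_left
  obtain ⟨z₁, ⟨hz₁, hcz₁⟩, hmin⟩ :=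
    hK.exists_isMinOn ⟨z₀, mem_closedBall_zero_iff.mpr le_rfl, hcz₀⟩ continuous_norm.continuousOn
  have hz₁R : closedBall (0 : E) ‖z₁‖ ⊆ ball 0 R :=
    (closedBall_subset_closedBall (mem_closedBall_zero_iff.mp hz₁)).trans hsub
  have hz₁0 : ‖z₁‖ ≠ 0 := fun h => hu0.not_ge (norm_eq_zero.mp h ▸ hcz₁)
  have hlt : ∀ z ∈ ball (0 : E) ‖z₁‖, u z ≤ c := fun z hz => by
    by_contra! hcz
    exact (mem_ball_zero_iff.mp hz).not_ge <|
      hmin ⟨mem_closedBall_zero_iff.mpr ((mem_ball_zero_iff.mp hz).le.trans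
        (mem_closedBall_zero_iff.mp hz₁)), hcz.le⟩
  have hle : ∀ z ∈ closedBall (0 : E) ‖z₁‖, u z ≤ c := by
    rw [← closure_ball 0 hz₁0]
    exact le_on_closure hlt ((hu.mono hz₁R).mono (closure_ball (0 : E) hz₁0).le) continuousOn_const
  have hcz₁ : u z₁ = c := le_antisymm (hle z₁ (mem_closedBall_zero_iff.mpr le_rfl)) hcz₁
  exact ⟨z₁, hz₁R (mem_closedBall_zero_iff.mpr le_rfl), hcz₁, fun z hz => hcz₁ ▸ hle z hz⟩

namespace Complex

theorem re_div_one_add_of_norm_eq_one {W : ℂ} (hW : ‖W‖ = 1) (hW' : 1 + W ≠ 0) :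
    (W / (1 + W)).re = 1 / 2 := by
  have hsq : W.re * W.re + W.im * W.im = 1 := by
    rw [← normSq_apply, normSq_eq_norm_sq, hW, one_pow]
  have hden : normSq (1 + W) = 2 * (1 + W.re) := by
    simp only [normSq_apply, add_re, add_im, one_re, one_im]
    linear_combination hsq
  have hpos : 0 < 2 * (1 + W.re) := hden ▸ normSq_pos.mpr hW'
  simp only [div_re, hden, add_re, add_im, one_re, one_im, zero_add]
  rw [← add_div, div_eq_iff hpos.ne']
  linear_combination hsq

/-- A boundary Schwarz lemma: `Re g ≤ 1` on the unit circle kills the tangential derivative of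
`Re g` at `1`, and `Re g t ≤ t` on `[0, 1]` bounds the radial one below by `1`. -/
theorem im_eq_zero_and_one_le_re_of_hasDerivAt_one {g : ℂ → ℂ} {g' : ℂ}
    (hd : HasDerivAt g g' 1) (hg1 : g 1 = 1) (hle : ∀ ζ, ‖ζ‖ ≤ 1 → ‖g ζ‖ ≤ ‖ζ‖) :
    g'.im = 0 ∧ 1 ≤ g'.re := by
  have re_le_norm_of_le_one (ζ : ℂ) (hζ : ‖ζ‖ ≤ 1) : (g ζ).re ≤ ‖ζ‖ :=
    (re_le_norm _).trans (hle ζ hζ)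
  constructor
  · have hcircle : HasDerivAt (fun θ : ℝ => exp (θ * I)) I 0 := by
      simpa using ((hasDerivAt_id (0 : ℝ)).ofReal_comp.mul_const I).cexp
    have hmax : IsLocalMax (fun θ : ℝ => (g (exp (θ * I))).re) 0 := by
      refine IsMaxOn.isLocalMax (fun θ _ => ?_) Filter.univ_mem
      simpa [hg1, norm_exp_ofReal_mul_I] using
        re_le_norm_of_le_one _ (norm_exp_ofReal_mul_I θ).le
    have hderiv := reCLM.hasFDerivAt.comp_hasDerivAt (0 : ℝ) (hd.comp_of_eq 0 hcircle (by simp))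
    simpa using hmax.hasDerivAt_eq_zero hderiv
  · have hmin : IsLocalMinOn (fun t : ℝ => t - (g t).re) (Icc 0 1) 1 := by
      refine IsMinOn.localize (fun t ht => ?_)
      have hgt : (g t).re ≤ t := by
        simpa [abs_of_nonneg ht.1] using
          re_le_norm_of_le_one t (by simpa [abs_of_nonneg ht.1] using ht.2)
      simpa [hg1] using hgt
    have hderiv := (hasDerivAt_id (1 : ℝ)).sub (hd.real_of_complex (z := 1))
    simpa using hmin.hasFDerivWithinAt_nonneg hderiv.hasFDerivAt.hasFDerivWithinAt
      (y := -1) (mem_posTangentConeAt_of_segment_subset (by simp [segment_symm ℝ (1 : ℝ)]))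

/-- Jack's lemma. -/
theorem exists_one_le_mul_deriv_eq_of_isMaxOn_norm {w : ℂ → ℂ} {R : ℝ} {z₁ : ℂ}
    (hd : DifferentiableOn ℂ w (ball 0 R)) (hz₁ : z₁ ∈ ball 0 R) (hw0 : w 0 = 0)
    (hwz₁ : w z₁ ≠ 0) (hmax : IsMaxOn (‖w ·‖) (closedBall 0 ‖z₁‖) z₁) :
    ∃ k : ℝ, 1 ≤ k ∧ z₁ * deriv w z₁ = k * w z₁ := by
  set g : ℂ → ℂ := fun ζ => w (z₁ * ζ) / w z₁
  have hmem {ζ : ℂ} (hζ : ‖ζ‖ ≤ 1) : z₁ * ζ ∈ closedBall 0 ‖z₁‖ := by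
    simpa using mul_le_of_le_one_right (norm_nonneg z₁) hζ
  have hR : closedBall 0 ‖z₁‖ ⊆ ball (0 : ℂ) R := closedBall_subset_ball (mem_ball_zero_iff.mp hz₁)
  have hderiv {ζ : ℂ} (hζ : ‖ζ‖ ≤ 1) : HasDerivAt g (deriv w (z₁ * ζ) * z₁ / w z₁) ζ :=
    (((hd.differentiableAt (isOpen_ball.mem_nhds (hR (hmem hζ)))).hasDerivAt.comp ζ
      ((hasDerivAt_id ζ).const_mul z₁)).div_const (w z₁)).congr_deriv (by simp)
  have hbound {ζ : ℂ} (hζ : ‖ζ‖ ≤ 1) : ‖g ζ‖ ≤ 1 := by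
    simpa [g, norm_div, div_le_one (norm_pos_iff.mpr hwz₁)] using hmax (hmem hζ)
  have hschwarz (ζ : ℂ) (hζ : ‖ζ‖ ≤ 1) : ‖g ζ‖ ≤ ‖ζ‖ := by
    rcases hζ.lt_or_eq with hζ | hζ
    · exact norm_le_norm_of_mapsTo_ball
        (fun ζ hζ => (hderiv (mem_ball_zero_iff.mp hζ).le).differentiableAt.differentiableWithinAt)
        (fun ζ hζ => mem_closedBall_zero_iff.mpr (hbound (mem_ball_zero_iff.mp hζ).le))
        (by simp [g, hw0]) hζ
    · exact hζ ▸ hbound hζ.le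
  obtain ⟨him, hre⟩ := im_eq_zero_and_one_le_re_of_hasDerivAt_one (hderiv (by simp))
    (by simp [g, hwz₁]) hschwarz
  refine ⟨_, hre, ?_⟩
  rw [conj_eq_iff_re.mp (conj_eq_iff_im.mpr him)]
  field_simp

end Complex

theorem class_C_criterion_general (f : ℂ → ℂ)
    (hf : DifferentiableOn ℂ f (ball (0:ℂ) 1))
    (hf'0 : deriv f 0 = 1)
    (β γ δ : ℝ) (hγ : 0 ≤ γ) (hδ : -(1/2) < δ)
    (hne : ∀ z ∈ ball (0:ℂ) 1, deriv f z ≠ 0)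
    (hineq : ∀ z ∈ ball (0:ℂ) 1,
      ‖deriv f z - 1‖ ^ β * ‖(δ : ℂ) + z * deriv (deriv f) z / deriv f z‖ ^ γ
        < ((1 + 2*δ)/2) ^ γ) :
    ∀ z ∈ ball (0:ℂ) 1, ‖deriv f z - 1‖ < 1 := by
  intro z hz
  by_contra! hz1
  set w : ℂ → ℂ := fun z => deriv f z - 1 with hw
  have hwd : DifferentiableOn ℂ w (ball 0 1) :=
    (hf.analyticOnNhd isOpen_ball).deriv.differentiableOn.sub_const 1
  have hw0 : w 0 = 0 := by simp [w, hf'0]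
  obtain ⟨z₁, hz₁, hwz₁, hmax⟩ :=
    exists_isMaxOn_closedBall_eq_of_le hwd.continuousOn.norm (by simp [hw0]) hz hz1
  obtain ⟨k, hk, hkz₁⟩ := exists_one_le_mul_deriv_eq_of_isMaxOn_norm hwd hz₁ hw0
    (norm_ne_zero_iff.mp (by simp [hwz₁])) hmax
  have hf'z₁ : 1 + w z₁ = deriv f z₁ := by simp [w]
  have hQ : (δ : ℂ) + z₁ * deriv (deriv f) z₁ / deriv f z₁ = δ + k * (w z₁ / (1 + w z₁)) := by
    rw [← deriv_sub_const (f := deriv f) 1, ← hw, hkz₁, hf'z₁, mul_div_assoc]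
  have hQ_norm : (1 + 2 * δ) / 2 ≤ ‖(δ : ℂ) + z₁ * deriv (deriv f) z₁ / deriv f z₁‖ := by
    refine le_trans ?_ (re_le_norm _)
    rw [hQ, add_re, ofReal_re, re_ofReal_mul,
      re_div_one_add_of_norm_eq_one hwz₁ (hf'z₁ ▸ hne z₁ hz₁)]
    linarith
  have hlt := hineq z₁ hz₁
  rw [show ‖deriv f z₁ - 1‖ = 1 from hwz₁, Real.one_rpow, one_mul] at hlt
  exact hlt.not_ge (Real.rpow_le_rpow (by linarith) hQ_norm hγ)

theorem class_C_criterion (f : ℂ → ℂ)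
    (hf : DifferentiableOn ℂ f (ball (0:ℂ) 1))
    (hf0 : f 0 = 0) (hf'0 : deriv f 0 = 1)
    (β γ δ : ℝ) (hβ : 0 ≤ β) (hγ : 0 ≤ γ) (hδ : -(1/2) < δ)
    (hne : ∀ z ∈ ball (0:ℂ) 1, deriv f z ≠ 0)
    (hineq : ∀ z ∈ ball (0:ℂ) 1,
      ‖deriv f z - 1‖ ^ β * ‖(δ : ℂ) + z * deriv (deriv f) z / deriv f z‖ ^ γ
        < ((1 + 2*δ)/2) ^ γ) :
    ∀ z ∈ ball (0:ℂ) 1, ‖deriv f z - 1‖ < 1 :=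
  class_C_criterion_general f hf hf'0 β γ δ hγ hδ hne hineq
end

section
/- Let f be analytic on the open unit disk 𝔻 with f(0)=0 and f'(0)=1, and let β, γ ≥ 0 be real. If |f'(z) - 1|^β · |z·f''(z)/f'(z)|^γ < (1/2)^γ for all z ∈ 𝔻 (with f'(z) ≠ 0), then |f'(z) - 1| < 1 for all z ∈ 𝔻. -/
/-!
Put `g = f' - 1`, so `g 0 = 0`. If `‖g z‖ ≥ 1` for some `z` in the disk, let `w` maximise `‖g‖`
over `|ζ| ≤ |z|`; then `‖g w‖ ≥ 1` and `w` also maximises `‖g‖` over `|ζ| ≤ |w|`. By the Schwarz lemma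
`‖g (t w)‖ ≤ t ‖g w‖` for `0 ≤ t < 1`, and letting `t → 1` gives the weak form
`‖g w‖ ≤ ‖w g'(w)‖` of Jack's lemma. Since `‖f'(w)‖ ≤ ‖g w‖ + 1 ≤ 2 ‖g w‖`, this yields
`‖w f''(w) / f'(w)‖ ≥ 1/2`, and together with `‖f'(w) - 1‖ ≥ 1` it contradicts the hypothesis.
-/

open Complex Metric Set Filter Topology

section JackLemma

variable {E : Type*} [NormedAddCommGroup E] [NormedSpace ℂ E]

theorem norm_apply_ofReal_mul_le_of_isMaxOn_closedBall {g : ℂ → E} {w : ℂ}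
    (hg : DifferentiableOn ℂ g (ball 0 ‖w‖)) (hg0 : g 0 = 0)
    (hmax : IsMaxOn (‖g ·‖) (closedBall 0 ‖w‖) w) {t : ℝ} (ht : t ∈ Ico (0 : ℝ) 1) :
    ‖g (t * w)‖ ≤ t * ‖g w‖ := by
  rcases eq_or_ne w 0 with rfl | hw
  · simp [hg0]
  have hw' : 0 < ‖w‖ := norm_pos_iff.mpr hw
  have hmaps : MapsTo g (ball 0 ‖w‖) (closedBall (g 0) ‖g w‖) := fun z hz => by
    simpa [hg0] using hmax (ball_subset_closedBall hz)
  have htw : (t : ℂ) * w ∈ ball 0 ‖w‖ := by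
    rw [mem_ball_zero_iff, norm_mul, norm_real, Real.norm_of_nonneg ht.1]
    exact mul_lt_of_lt_one_left hw' ht.2
  have hschwarz := Complex.dist_le_div_mul_dist_of_mapsTo_ball hg hmaps htw
  rw [hg0, dist_zero_right, dist_zero_right, norm_mul, norm_real,
    Real.norm_of_nonneg ht.1] at hschwarz
  calc ‖g (t * w)‖ ≤ ‖g w‖ / ‖w‖ * (t * ‖w‖) := hschwarz
    _ = t * ‖g w‖ := by field_simp

theorem norm_le_mul_norm_deriv_of_isMaxOn_closedBall {g : ℂ → E} {w : ℂ}
    (hg : DifferentiableOn ℂ g (ball 0 ‖w‖)) (hgw : DifferentiableAt ℂ g w) (hg0 : g 0 = 0)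
    (hmax : IsMaxOn (‖g ·‖) (closedBall 0 ‖w‖) w) :
    ‖g w‖ ≤ ‖w‖ * ‖deriv g w‖ := by
  rcases eq_or_ne w 0 with rfl | hw
  · simp [hg0]
  have hw' : 0 < ‖w‖ := norm_pos_iff.mpr hw
  have hslope : ∀ t ∈ Ioo (0 : ℝ) 1, ‖g w‖ / ‖w‖ ≤ ‖slope g w (t * w)‖ := by
    intro t ht
    have hradial :=
      norm_apply_ofReal_mul_le_of_isMaxOn_closedBall hg hg0 hmax (Ioo_subset_Ico_self ht)
    have hdist : ‖(t : ℂ) * w - w‖ = (1 - t) * ‖w‖ := by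
      rw [← sub_one_mul, norm_mul, ← ofReal_one, ← ofReal_sub, norm_real, norm_sub_rev,
        Real.norm_of_nonneg (sub_nonneg.mpr ht.2.le)]
    rw [slope_def_module, norm_smul, norm_inv, hdist, inv_mul_eq_div, ← div_div,
      div_le_div_iff_of_pos_right hw', le_div_iff₀ (sub_pos.mpr ht.2), norm_sub_rev]
    linarith [norm_sub_norm_le (g w) (g (t * w))]
  have hlim : Tendsto (fun t : ℝ => (t : ℂ) * w) (𝓝[<] 1) (𝓝[≠] w) := by
    refine tendsto_nhdsWithin_iff.mpr ⟨?_, ?_⟩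
    · have : Continuous (fun t : ℝ => (t : ℂ) * w) := by fun_prop
      simpa using (this.tendsto 1).mono_left nhdsWithin_le_nhds
    · filter_upwards [self_mem_nhdsWithin] with t ht
      simpa [hw] using ht.ne
  have hderiv : ‖g w‖ / ‖w‖ ≤ ‖deriv g w‖ :=
    ge_of_tendsto ((hasDerivAt_iff_tendsto_slope.mp hgw.hasDerivAt).comp hlim).norm
      (by filter_upwards [Ioo_mem_nhdsLT zero_lt_one] with t ht using hslope t ht)
  rwa [div_le_iff₀' hw'] at hderiv

end JackLemma

theorem half_le_norm_div_of_norm_sub_one_le {a b : ℂ} (ha : a ≠ 0) (h1 : 1 ≤ ‖a - 1‖)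
    (h2 : ‖a - 1‖ ≤ ‖b‖) : 1 / 2 ≤ ‖b / a‖ := by
  have : ‖a‖ ≤ ‖a - 1‖ + 1 := by simpa using norm_add_le (a - 1) 1
  rw [norm_div, le_div_iff₀ (norm_pos_iff.mpr ha)]
  linarith

theorem class_C_criterion_delta_zero_general (f : ℂ → ℂ)
    (hf : DifferentiableOn ℂ f (ball (0:ℂ) 1))
    (hf'0 : deriv f 0 = 1)
    (β γ : ℝ) (hβ : 0 ≤ β) (hγ : 0 ≤ γ)
    (hne : ∀ z ∈ ball (0:ℂ) 1, deriv f z ≠ 0)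
    (hineq : ∀ z ∈ ball (0:ℂ) 1,
      ‖deriv f z - 1‖ ^ β * ‖z * deriv (deriv f) z / deriv f z‖ ^ γ
        < (1/2 : ℝ) ^ γ) :
    ∀ z ∈ ball (0:ℂ) 1, ‖deriv f z - 1‖ < 1 := by
  intro z hz
  by_contra! hz1
  set g : ℂ → ℂ := fun ζ => deriv f ζ - 1
  have hg : DifferentiableOn ℂ g (ball 0 1) :=
    (hf.analyticOnNhd isOpen_ball).deriv.differentiableOn.sub_const 1
  have hzK : closedBall (0 : ℂ) ‖z‖ ⊆ ball 0 1 := closedBall_subset_ball (mem_ball_zero_iff.mp hz)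
  obtain ⟨w, hwK, hmax⟩ := (isCompact_closedBall (0 : ℂ) ‖z‖).exists_isMaxOn
    (nonempty_closedBall.mpr (norm_nonneg z)) (hg.continuousOn.mono hzK).norm
  have hw : w ∈ ball (0 : ℂ) 1 := hzK hwK
  have hgw : 1 ≤ ‖g w‖ := hz1.trans (hmax (mem_closedBall_zero_iff.mpr le_rfl))
  have hjack : ‖g w‖ ≤ ‖w‖ * ‖deriv g w‖ :=
    norm_le_mul_norm_deriv_of_isMaxOn_closedBall
      (hg.mono (ball_subset_ball (mem_ball_zero_iff.mp hw).le))
      (hg.differentiableAt (isOpen_ball.mem_nhds hw)) (by simp [g, hf'0])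
      (hmax.on_subset (closedBall_subset_closedBall (mem_closedBall_zero_iff.mp hwK)))
  have hhalf : 1 / 2 ≤ ‖w * deriv (deriv f) w / deriv f w‖ :=
    half_le_norm_div_of_norm_sub_one_le (hne w hw) hgw
      (by simpa [g, deriv_sub_const, norm_mul] using hjack)
  refine (hineq w hw).not_ge ?_
  calc (1 / 2 : ℝ) ^ γ = 1 * (1 / 2) ^ γ := (one_mul _).symm
    _ ≤ ‖deriv f w - 1‖ ^ β * ‖w * deriv (deriv f) w / deriv f w‖ ^ γ :=
      mul_le_mul (Real.one_le_rpow hgw hβ) (Real.rpow_le_rpow (by norm_num) hhalf hγ)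
        (by positivity) (by positivity)

theorem class_C_criterion_delta_zero (f : ℂ → ℂ)
    (hf : DifferentiableOn ℂ f (ball (0:ℂ) 1))
    (hf0 : f 0 = 0) (hf'0 : deriv f 0 = 1)
    (β γ : ℝ) (hβ : 0 ≤ β) (hγ : 0 ≤ γ)
    (hne : ∀ z ∈ ball (0:ℂ) 1, deriv f z ≠ 0)
    (hineq : ∀ z ∈ ball (0:ℂ) 1,
      ‖deriv f z - 1‖ ^ β * ‖z * deriv (deriv f) z / deriv f z‖ ^ γ
        < (1/2 : ℝ) ^ γ) :
    ∀ z ∈ ball (0:ℂ) 1, ‖deriv f z - 1‖ < 1 :=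
  class_C_criterion_delta_zero_general f hf hf'0 β γ hβ hγ hne hineq
end

section
/- Let f be analytic on the open unit disk 𝔻 with f(0)=0, f'(0)=1, and f(z) ≠ 0 for z ≠ 0. Suppose there exist real numbers β, γ with β + 2γ ≥ 0 such that for all z ∈ 𝔻, |z·f'(z)/f(z) + 1|^β · |z·(d/dz)(z·f'(z)/f(z))|^γ < (1/2)^γ. Then Re(z·f'(z)/f(z)) > 0 for all z ∈ 𝔻. -/
/-!
Write `p = z f' / f` (the function `G`). If `Re p` fails to be positive on the disk, take a point
`z₀` of least modulus where `Re p ≤ 0`; there `Re p(z₀) = 0` while `Re p > 0` on `|z| < |z₀|`.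
The Cayley transform `w = (1 - p) / (1 + p)` then maps `|z| < |z₀|` into the unit disk with
`w(0) = 0` and `|w(z₀)| = 1`, so Schwarz's lemma along the ray `t ↦ w(t z₀)` gives Jack's
inequality `|z₀ w'(z₀)| ≥ 1`, i.e. `|z₀ p'(z₀)| ≥ |1 + p(z₀)|² / 2`. Since `|1 + p(z₀)| ≥ 1`,
this contradicts the hypothesis when `γ > 0`. When `γ ≤ 0` the hypothesis cannot hold at points
near `0` where `z p'(z) ≠ 0`, so `0` is a non-isolated zero of `p'`, and `p ≡ 1` by the identity
theorem.
-/

open Complex Metric Filter Set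
open scoped Topology

theorem one_le_norm_of_hasDerivWithinAt_of_norm_le_self {E : Type*} [NormedAddCommGroup E]
    [NormedSpace ℝ E] {φ : ℝ → E} {φ' : E} (hφ : HasDerivWithinAt φ φ' (Iio 1) 1)
    (hle : ∀ᶠ t in 𝓝[<] 1, ‖φ t‖ ≤ t) (h1 : ‖φ 1‖ = 1) : 1 ≤ ‖φ'‖ := by
  have hslope : Tendsto (slope φ 1) (𝓝[<] 1) (𝓝 φ') := by
    simpa using hasDerivWithinAt_iff_tendsto_slope.1 hφ
  refine ge_of_tendsto hslope.norm ?_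
  filter_upwards [hle, self_mem_nhdsWithin] with t ht htlt
  have ht1 : 0 < 1 - t := sub_pos.2 htlt
  calc 1 = (1 - t)⁻¹ * (1 - t) := (inv_mul_cancel₀ ht1.ne').symm
    _ ≤ (1 - t)⁻¹ * ‖φ t - φ 1‖ := by
        gcongr
        linarith [norm_sub_norm_le (φ 1) (φ t), norm_sub_rev (φ t) (φ 1)]
    _ = ‖slope φ 1 t‖ := by
        rw [slope_def_module, norm_smul, norm_inv, Real.norm_eq_abs, abs_sub_comm, abs_of_pos ht1]

theorem one_le_norm_smul_deriv_of_mapsTo_ball {E : Type*} [NormedAddCommGroup E]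
    [NormedSpace ℂ E] {w : ℂ → E} {z₀ : ℂ}
    (hw : DifferentiableOn ℂ w (ball 0 ‖z₀‖)) (hmaps : MapsTo w (ball 0 ‖z₀‖) (closedBall 0 1))
    (hw0 : w 0 = 0) (hwz₀ : DifferentiableAt ℂ w z₀) (hnorm : ‖w z₀‖ = 1) :
    1 ≤ ‖z₀ • deriv w z₀‖ := by
  have hz₀ : 0 < ‖z₀‖ := norm_pos_iff.2 fun h => by simp [h, hw0] at hnorm
  have hray : HasDerivAt (fun t : ℝ => w (t * z₀)) (z₀ • deriv w z₀) 1 := by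
    have hline : HasDerivAt (fun t : ℝ => (t : ℂ) * z₀) z₀ 1 := by
      simpa using (hasDerivAt_id (1 : ℝ)).ofReal_comp.mul_const z₀
    simpa [Function.comp_def] using
      (hwz₀.hasFDerivAt.restrictScalars ℝ).comp_hasDerivAt_of_eq 1 hline (by simp)
  refine one_le_norm_of_hasDerivWithinAt_of_norm_le_self hray.hasDerivWithinAt ?_ (by simpa)
  filter_upwards [Ioo_mem_nhdsLT zero_lt_one] with t ht
  have hnorm_t : ‖(t : ℂ) * z₀‖ = ‖z₀‖ * t := by
    rw [norm_mul, Complex.norm_real, Real.norm_of_nonneg ht.1.le, mul_comm]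
  have hmem : (t : ℂ) * z₀ ∈ ball 0 ‖z₀‖ := by
    rw [mem_ball_zero_iff, hnorm_t]
    exact mul_lt_of_lt_one_right hz₀ ht.2
  have hschwarz := Complex.dist_le_div_mul_dist_of_mapsTo_ball hw (by rwa [hw0]) hmem
  rw [hw0, dist_zero_right, dist_zero_right, hnorm_t] at hschwarz
  rwa [one_div, inv_mul_cancel_left₀ hz₀.ne'] at hschwarz

namespace Complex

theorem sq_norm_one_add_sub_sq_norm_one_sub (z : ℂ) : ‖1 + z‖ ^ 2 - ‖1 - z‖ ^ 2 = 4 * z.re := by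
  simp only [Complex.sq_norm, normSq_apply, add_re, add_im, sub_re, sub_im, one_re, one_im]
  ring

theorem one_add_ne_zero_of_re_nonneg {z : ℂ} (hz : 0 ≤ z.re) : 1 + z ≠ 0 := by
  intro h
  have := congrArg re h
  simp only [add_re, one_re, zero_re] at this
  linarith

theorem norm_one_sub_div_one_add_le_one {z : ℂ} (hz : 0 ≤ z.re) : ‖(1 - z) / (1 + z)‖ ≤ 1 := by
  rw [norm_div, div_le_one (norm_pos_iff.2 (one_add_ne_zero_of_re_nonneg hz)),
    ← sq_le_sq₀ (norm_nonneg _) (norm_nonneg _)]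
  linarith [sq_norm_one_add_sub_sq_norm_one_sub z]

theorem norm_one_sub_div_one_add_of_re_eq_zero {z : ℂ} (hz : z.re = 0) :
    ‖(1 - z) / (1 + z)‖ = 1 := by
  rw [norm_div, div_eq_one_iff_eq (norm_ne_zero_iff.2 (one_add_ne_zero_of_re_nonneg hz.ge)),
    ← sq_eq_sq₀ (norm_nonneg _) (norm_nonneg _)]
  linarith [sq_norm_one_add_sub_sq_norm_one_sub z]

end Complex

theorem sq_norm_add_one_div_two_le_norm_mul_deriv {G : ℂ → ℂ} {z₀ : ℂ}
    (hG : DifferentiableOn ℂ G (ball 0 ‖z₀‖)) (hGz₀ : DifferentiableAt ℂ G z₀) (hG0 : G 0 = 1)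
    (hpos : ∀ z ∈ ball 0 ‖z₀‖, 0 < (G z).re) (hz₀ : (G z₀).re = 0) :
    ‖G z₀ + 1‖ ^ 2 / 2 ≤ ‖z₀ * deriv G z₀‖ := by
  set w : ℂ → ℂ := fun z => (1 - G z) / (1 + G z)
  have hne : ∀ z ∈ ball 0 ‖z₀‖, 1 + G z ≠ 0 := fun z hz =>
    one_add_ne_zero_of_re_nonneg (hpos z hz).le
  have hne₀ : 1 + G z₀ ≠ 0 := one_add_ne_zero_of_re_nonneg hz₀.ge
  have hw' : HasDerivAt w (-2 * deriv G z₀ / (1 + G z₀) ^ 2) z₀ := by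
    refine (hGz₀.hasDerivAt.const_sub 1).div (hGz₀.hasDerivAt.const_add 1) hne₀ |>.congr_deriv ?_
    ring
  have hjack : 1 ≤ ‖z₀ • deriv w z₀‖ :=
    one_le_norm_smul_deriv_of_mapsTo_ball
      (((differentiableOn_const 1).sub hG).div ((differentiableOn_const 1).add hG) hne)
      (fun z hz => mem_closedBall_zero_iff.2 (norm_one_sub_div_one_add_le_one (hpos z hz).le))
      (by simp [w, hG0]) hw'.differentiableAt (norm_one_sub_div_one_add_of_re_eq_zero hz₀)
  have hden : 0 < ‖G z₀ + 1‖ ^ 2 := by rw [add_comm]; positivity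
  rw [hw'.deriv, smul_eq_mul, norm_mul, norm_div, norm_mul, norm_neg, norm_pow, add_comm 1,
    Complex.norm_ofNat, mul_div_assoc', one_le_div hden] at hjack
  rw [norm_mul]
  linarith

theorem exists_norm_minimal_zero_of_nonpos {E : Type*} [NormedAddCommGroup E] [NormedSpace ℝ E]
    [ProperSpace E] {u : E → ℝ} {R : ℝ} (hu : ContinuousOn u (ball 0 R)) (hu0 : 0 < u 0)
    {z₁ : E} (hz₁ : z₁ ∈ ball 0 R) (huz₁ : u z₁ ≤ 0) :
    ∃ z₀ ∈ ball 0 R, u z₀ = 0 ∧ ∀ z ∈ ball 0 ‖z₀‖, 0 < u z := by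
  have hsub : closedBall (0 : E) ‖z₁‖ ⊆ ball 0 R :=
    closedBall_subset_ball (mem_ball_zero_iff.1 hz₁)
  set S := closedBall (0 : E) ‖z₁‖ ∩ u ⁻¹' Iic 0
  have hS : IsCompact S := (isCompact_closedBall 0 ‖z₁‖).of_isClosed_subset
    ((hu.mono hsub).preimage_isClosed_of_isClosed isClosed_closedBall isClosed_Iic)
    inter_subset_left
  obtain ⟨z₀, ⟨hz₀R, hz₀⟩, hmin⟩ :=
    hS.exists_isMinOn ⟨z₁, mem_closedBall_zero_iff.2 le_rfl, huz₁⟩ continuous_norm.continuousOn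
  have hpos : ∀ z ∈ ball 0 ‖z₀‖, 0 < u z := by
    intro z hz
    by_contra! hle
    rw [mem_ball_zero_iff] at hz
    exact not_le.2 hz (hmin
      ⟨mem_closedBall_zero_iff.2 (hz.le.trans (mem_closedBall_zero_iff.1 hz₀R)), hle⟩)
  have hz₀ne : ‖z₀‖ ≠ 0 := by
    rw [norm_ne_zero_iff]
    rintro rfl
    exact not_le.2 hu0 hz₀
  refine ⟨z₀, hsub hz₀R, le_antisymm hz₀ ?_, hpos⟩
  have hcont : ContinuousWithinAt u (ball 0 ‖z₀‖) z₀ :=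
    (hu.continuousAt (isOpen_ball.mem_nhds (hsub hz₀R))).continuousWithinAt
  have hcl : z₀ ∈ closure (ball 0 ‖z₀‖) := by
    rw [closure_ball _ hz₀ne]
    exact mem_closedBall_zero_iff.2 le_rfl
  exact isClosed_Ici.closure_subset (hcont.mem_closure hcl fun z hz => (hpos z hz).le)

theorem IsOpen.eq_of_frequently_deriv_eq_zero {E : Type*} [NormedAddCommGroup E]
    [NormedSpace ℂ E] [CompleteSpace E] {f : ℂ → E} {U : Set ℂ} {z₀ z : ℂ}
    (hU : IsOpen U) (hU' : IsPreconnected U) (hf : DifferentiableOn ℂ f U) (hz₀ : z₀ ∈ U)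
    (hfreq : ∃ᶠ z in 𝓝[≠] z₀, deriv f z = 0) (hz : z ∈ U) : f z = f z₀ :=
  hU.is_const_of_deriv_eq_zero hU' hf
    ((hf.analyticOnNhd hU).deriv.eqOn_zero_of_preconnected_of_frequently_eq_zero hU' hz₀ hfreq)
    hz hz₀

theorem one_half_rpow_le_rpow_mul_rpow_of_nonpos {a b β γ : ℝ} (hβ : 0 ≤ β) (hγ : γ ≤ 0)
    (ha : 1 ≤ a) (hb : 0 < b) (hb' : b ≤ 1 / 2) : (1 / 2) ^ γ ≤ a ^ β * b ^ γ :=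
  calc (1 / 2 : ℝ) ^ γ ≤ b ^ γ := Real.rpow_le_rpow_of_nonpos hb hb' hγ
    _ ≤ a ^ β * b ^ γ := le_mul_of_one_le_left (by positivity) (Real.one_le_rpow ha hβ)

theorem one_half_rpow_le_rpow_mul_rpow_of_nonneg {a b β γ : ℝ} (hγ : 0 ≤ γ)
    (hβγ : 0 ≤ β + 2 * γ) (ha : 1 ≤ a) (hb : a ^ 2 / 2 ≤ b) : (1 / 2) ^ γ ≤ a ^ β * b ^ γ := by
  have ha0 : 0 < a := by linarith
  calc (1 / 2 : ℝ) ^ γ ≤ a ^ (β + 2 * γ) * (1 / 2) ^ γ :=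
        le_mul_of_one_le_left (by positivity) (Real.one_le_rpow ha hβγ)
    _ = a ^ β * (a ^ 2 / 2) ^ γ := by
        rw [Real.rpow_add ha0, div_eq_mul_one_div (a ^ 2),
          Real.mul_rpow (by positivity) (by norm_num), ← Real.rpow_natCast, ← Real.rpow_mul ha0.le]
        push_cast
        ring
    _ ≤ a ^ β * b ^ γ := by gcongr

theorem frequently_deriv_eq_zero_of_rpow_lt {G : ℂ → ℂ} (hG : AnalyticAt ℂ G 0) (hG0 : G 0 = 1)
    {β γ : ℝ} (hβ : 0 ≤ β) (hγ : γ ≤ 0)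
    (hineq : ∀ᶠ z in 𝓝 0, ‖G z + 1‖ ^ β * ‖z * deriv G z‖ ^ γ < (1 / 2 : ℝ) ^ γ) :
    ∃ᶠ z in 𝓝[≠] 0, deriv G z = 0 := by
  intro hne
  have hG1 : ∀ᶠ z in 𝓝 0, 1 ≤ ‖G z + 1‖ :=
    (hG.continuousAt.add continuousAt_const).norm.eventually_const_le (by norm_num [hG0])
  have hG' : ∀ᶠ z in 𝓝 0, ‖z * deriv G z‖ < 1 / 2 :=
    (continuousAt_id.mul hG.deriv.continuousAt).norm.eventually_lt_const (by norm_num)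
  obtain ⟨z, ⟨⟨hz1, hz'⟩, hlt⟩, hd, hz⟩ := (((hG1.and hG').and hineq).filter_mono
    nhdsWithin_le_nhds |>.and (hne.and self_mem_nhdsWithin)).exists
  exact hlt.not_ge (one_half_rpow_le_rpow_mul_rpow_of_nonpos hβ hγ hz1
    (norm_pos_iff.2 (mul_ne_zero hz hd)) hz'.le)

theorem starlike_criterion'_general (G : ℂ → ℂ)
    (hG : DifferentiableOn ℂ G (ball (0:ℂ) 1))
    (hG0 : G 0 = 1)
    (β γ : ℝ) (hβγ : 0 ≤ β + 2*γ)
    (hineq : ∀ z ∈ ball (0:ℂ) 1,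
      ‖G z + 1‖ ^ β * ‖z * deriv G z‖ ^ γ < (1/2 : ℝ) ^ γ) :
    ∀ z ∈ ball (0:ℂ) 1, 0 < (G z).re := by
  have h0 : (0 : ℂ) ∈ ball (0 : ℂ) 1 := mem_ball_self one_pos
  intro z hz
  rcases le_or_gt γ 0 with hγ | hγ
  · have hfreq : ∃ᶠ w in 𝓝[≠] 0, deriv G w = 0 :=
      frequently_deriv_eq_zero_of_rpow_lt (hG.analyticAt (isOpen_ball.mem_nhds h0)) hG0
        (by linarith) hγ (eventually_of_mem (isOpen_ball.mem_nhds h0) hineq)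
    rw [isOpen_ball.eq_of_frequently_deriv_eq_zero (convex_ball 0 1).isPreconnected hG h0 hfreq hz,
      hG0]
    exact one_pos
  · by_contra! hz_re
    obtain ⟨z₀, hz₀, hre, hpos⟩ := exists_norm_minimal_zero_of_nonpos (u := fun z => (G z).re)
      (continuous_re.comp_continuousOn hG.continuousOn) (by simp [hG0]) hz hz_re
    have hjack := sq_norm_add_one_div_two_le_norm_mul_deriv
      (hG.mono (ball_subset_ball (mem_ball_zero_iff.1 hz₀).le))
      (hG.differentiableAt (isOpen_ball.mem_nhds hz₀)) hG0 hpos hre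
    have hG1 : 1 ≤ ‖G z₀ + 1‖ := (re_le_norm _).trans_eq' (by simp [hre])
    exact (hineq z₀ hz₀).not_ge (one_half_rpow_le_rpow_mul_rpow_of_nonneg hγ.le hβγ hG1 hjack)

theorem starlike_criterion' (f G : ℂ → ℂ)
    (hf : DifferentiableOn ℂ f (ball (0:ℂ) 1))
    (hf0 : f 0 = 0) (hf'0 : deriv f 0 = 1)
    (hfne : ∀ z ∈ ball (0:ℂ) 1, z ≠ 0 → f z ≠ 0)
    (hG : DifferentiableOn ℂ G (ball (0:ℂ) 1))
    (hG0 : G 0 = 1)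
    (hGf : ∀ z ∈ ball (0:ℂ) 1, z ≠ 0 → G z = z * deriv f z / f z)
    (β γ : ℝ) (hβγ : 0 ≤ β + 2*γ)
    (hineq : ∀ z ∈ ball (0:ℂ) 1,
      ‖G z + 1‖ ^ β * ‖z * deriv G z‖ ^ γ < (1/2 : ℝ) ^ γ) :
    ∀ z ∈ ball (0:ℂ) 1, 0 < (G z).re :=
  starlike_criterion'_general G hG hG0 β γ hβγ hineq
end

section
/- Let f be analytic on the open unit disk 𝔻 with f(0)=0, f'(0)=1, and f(z) ≠ 0 for z ≠ 0. Let α ≥ 0, β > 0 be real and set μ = β/(α+β) ∈ (0,1]. If for all z ∈ 𝔻, |z·f'(z)/f(z)|^α · |z·(d/dz)(z·f'(z)/f(z))|^β < (μ/2)^β, then there is an analytic branch of (z·f'(z)/f(z))^{1/μ} on 𝔻 (taking value 1 at 0) whose real part is positive throughout 𝔻, i.e. f ∈ 𝒮𝒯𝒮(μ). -/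
/-!
Raising the hypothesis to the power `1/β` gives `‖G‖^(1/μ - 1) ‖z G'‖ < μ/2`. On a disc
`‖z‖ < r` free of zeros of `G`, let `L` be the logarithm of `G` with `L 0 = 0` and
`H = exp (L/μ)`; then `‖z H'‖ = ‖G‖^(1/μ - 1) ‖z G'‖ / μ < 1/2`. Schwarz's lemma applied to
`z H'` gives `‖H'‖ ≤ 1/(2r)`, hence `‖H - 1‖ < 1/2`, so `Re H > 0` and `‖G‖ = ‖H‖^μ ≥ 2^(-μ)`.
As this bound does not depend on `r`, a zero of `G` of smallest modulus cannot exist, and the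
construction works on the whole disc. Finally `H^μ = G` because `log H` and `L/μ` have the same
derivative and vanish at `0`.
-/

open Complex Metric

theorem rpow_div_mul_lt_of_rpow_mul_rpow_lt {x y c α β : ℝ} (hx : 0 ≤ x) (hy : 0 ≤ y)
    (hc : 0 ≤ c) (hβ : 0 < β) (h : x ^ α * y ^ β < c ^ β) : x ^ (α / β) * y < c := by
  rwa [← Real.rpow_lt_rpow_iff (by positivity) hc hβ, Real.mul_rpow (by positivity) hy,
    ← Real.rpow_mul hx, div_mul_cancel₀ _ hβ.ne']

theorem exists_log_of_ne_zero_on_ball {g : ℂ → ℂ} {c : ℂ} {r : ℝ}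
    (hg : DifferentiableOn ℂ g (ball c r)) (hne : ∀ z ∈ ball c r, g z ≠ 0) :
    ∃ L : ℂ → ℂ, L c = log (g c) ∧
      (∀ z ∈ ball c r, HasDerivAt L (deriv g z / g z) z) ∧ ∀ z ∈ ball c r, exp (L z) = g z := by
  obtain ⟨L, hLc, hL⟩ :=
    (((hg.deriv isOpen_ball).div hg hne).isExactOn_ball).with_val_at c (log (g c))
  refine ⟨L, hLc, hL, fun z hz => ?_⟩
  have hc : c ∈ ball c r := mem_ball_self (pos_of_mem_ball hz)
  have hconst : ∀ w ∈ ball c r, HasDerivAt (fun w => exp (-L w) * g w) 0 w := by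
    intro w hw
    have h := (hL w hw).neg.cexp.mul (hg.differentiableAt (isOpen_ball.mem_nhds hw)).hasDerivAt
    refine h.congr_deriv ?_
    rw [Pi.div_apply]
    field_simp [hne w hw]
    ring
  have := isOpen_ball.is_const_of_deriv_eq_zero (convex_ball c r).isPreconnected
    (fun w hw => (hconst w hw).differentiableAt.differentiableWithinAt)
    (fun w hw => (hconst w hw).deriv) hz hc
  rwa [hLc, exp_neg, exp_neg, exp_log (hne c hc), inv_mul_cancel₀ (hne c hc),
    inv_mul_eq_one₀ (exp_ne_zero _)] at this

theorem eqOn_log_exp_comp_of_mem_slitPlane {K : ℂ → ℂ} {U : Set ℂ} (hU : IsOpen U)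
    (hUc : IsPreconnected U) (hK : DifferentiableOn ℂ K U)
    (hslit : ∀ z ∈ U, exp (K z) ∈ slitPlane) {c : ℂ} (hc : c ∈ U)
    (hKc : log (exp (K c)) = K c) : Set.EqOn (fun z => log (exp (K z))) K U := by
  have hderiv : ∀ z ∈ U, HasDerivAt (fun z => log (exp (K z))) (deriv K z) z := fun z hz => by
    simpa [mul_div_cancel_left₀ _ (exp_ne_zero _)] using
      (hK.differentiableAt (hU.mem_nhds hz)).hasDerivAt.cexp.clog (hslit z hz)
  exact hU.eqOn_of_deriv_eq hUc
    (fun z hz => (hderiv z hz).differentiableAt.differentiableWithinAt) hK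
    (fun z hz => (hderiv z hz).deriv) hc hKc

theorem norm_sub_le_of_norm_sub_mul_deriv_le {H : ℂ → ℂ} {c : ℂ} {r M : ℝ}
    (hH : DifferentiableOn ℂ H (ball c r))
    (hM : ∀ z ∈ ball c r, ‖(z - c) * deriv H z‖ ≤ M) {z : ℂ} (hz : z ∈ ball c r) :
    ‖H z - H c‖ ≤ M / r * ‖z - c‖ := by
  set P : ℂ → ℂ := fun w => (w - c) * deriv H w
  have hH' := hH.deriv isOpen_ball
  have hP : DifferentiableOn ℂ P (ball c r) := (differentiableOn_id.sub_const c).mul hH'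
  have hPc : P c = 0 := by simp [P]
  have hdslope : ∀ w ∈ ball c r, dslope P c w = deriv H w := by
    intro w hw
    rcases eq_or_ne w c with rfl | hwc
    · rw [dslope_same]
      have hP' : HasDerivAt P (1 * deriv H w + (w - w) * deriv (deriv H) w) w :=
        ((hasDerivAt_id' w).sub_const w).mul
          (hH'.differentiableAt (isOpen_ball.mem_nhds hw)).hasDerivAt
      simp [hP'.deriv]
    · rw [dslope_of_ne _ hwc, slope_def_field, hPc, sub_zero,
        mul_div_cancel_left₀ _ (sub_ne_zero.2 hwc)]
  have hbound : ∀ w ∈ ball c r, ‖deriv H w‖ ≤ M / r := fun w hw => by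
    rw [← hdslope w hw]
    exact Complex.norm_dslope_le_div_of_mapsTo_ball hP
      (fun w hw => by simpa [hPc, P] using hM w hw) hw
  exact (convex_ball c r).norm_image_sub_le_of_norm_deriv_le
    (fun w hw => hH.differentiableAt (isOpen_ball.mem_nhds hw)) hbound
    (mem_ball_self (pos_of_mem_ball hz)) hz

theorem ne_zero_on_ball_of_lower_bound_on_zero_free_balls {g : ℂ → ℂ} {c : ℂ} {R m : ℝ}
    (hg : ContinuousOn g (ball c R)) (hgc : g c ≠ 0) (hm : 0 < m)
    (hbound : ∀ r < R, (∀ z ∈ ball c r, g z ≠ 0) → ∀ z ∈ ball c r, m ≤ ‖g z‖) :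
    ∀ z ∈ ball c R, g z ≠ 0 := by
  by_contra! ⟨w, hw, hgw⟩
  set K := closedBall c (dist w c) ∩ g ⁻¹' {0}
  have hKR : closedBall c (dist w c) ⊆ ball c R := closedBall_subset_ball hw
  have hK : IsCompact K := (isCompact_closedBall c _).of_isClosed_subset
    ((hg.mono hKR).preimage_isClosed_of_isClosed isClosed_closedBall isClosed_singleton)
    Set.inter_subset_left
  obtain ⟨z₀, ⟨hz₀w, hgz₀⟩, hmin⟩ := hK.exists_isMinOn (f := fun z => dist z c)
    ⟨w, mem_closedBall.2 le_rfl, hgw⟩ (continuous_id.dist continuous_const).continuousOn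
  have hρ : dist z₀ c ≠ 0 := dist_ne_zero.2 (by rintro rfl; exact hgc hgz₀)
  have hne : ∀ z ∈ ball c (dist z₀ c), g z ≠ 0 := fun z hz hgz =>
    (mem_ball.1 hz).not_ge (hmin ⟨(mem_ball.1 hz).le.trans hz₀w, hgz⟩)
  have hclosure : closure (ball c (dist z₀ c)) ⊆ ball c R := by
    rw [closure_ball c hρ]; exact (closedBall_subset_closedBall hz₀w).trans hKR
  have := le_on_closure (hbound _ (mem_ball.1 (hKR hz₀w)) hne) continuousOn_const
    (hg.norm.mono hclosure) (x := z₀)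
    (by rw [closure_ball c hρ]; exact mem_closedBall.2 le_rfl)
  rw [Set.mem_singleton_iff.1 hgz₀, norm_zero] at this
  linarith

theorem exists_cpow_inv_branch_of_norm_rpow_mul_deriv_le {G : ℂ → ℂ} {r μ : ℝ}
    (hμ : 0 < μ) (hG : DifferentiableOn ℂ G (ball 0 r)) (hG0 : G 0 = 1)
    (hne : ∀ z ∈ ball 0 r, G z ≠ 0)
    (hbound : ∀ z ∈ ball 0 r, ‖G z‖ ^ (μ⁻¹ - 1) * ‖z * deriv G z‖ ≤ μ / 2) :
    ∃ H : ℂ → ℂ, DifferentiableOn ℂ H (ball 0 r) ∧ H 0 = 1 ∧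
      (∀ z ∈ ball 0 r, ‖H z - 1‖ < 1 / 2) ∧
      ∀ z ∈ ball 0 r, H z ^ (μ : ℂ) = G z := by
  obtain ⟨L, hL0, hL, hexp⟩ := exists_log_of_ne_zero_on_ball hG hne
  set K : ℂ → ℂ := fun z => L z / μ
  have hK : ∀ z ∈ ball 0 r, HasDerivAt K (deriv G z / G z / μ) z := fun z hz =>
    (hL z hz).div_const _
  have hKd : DifferentiableOn ℂ K (ball 0 r) := fun z hz =>
    (hK z hz).differentiableAt.differentiableWithinAt
  have hK0 : K 0 = 0 := by simp [K, hL0, hG0]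
  have hnorm : ∀ z ∈ ball 0 r, ‖exp (K z)‖ = ‖G z‖ ^ μ⁻¹ := fun z hz => by
    rw [← hexp z hz, norm_exp, norm_exp, ← Real.exp_mul, div_ofReal_re, div_eq_mul_inv]
  have hderiv : ∀ z ∈ ball 0 r, ‖(z - 0) * deriv (fun z => exp (K z)) z‖ ≤ 1 / 2 := by
    intro z hz
    rw [(hK z hz).cexp.deriv, sub_zero]
    calc ‖z * (exp (K z) * (deriv G z / G z / μ))‖
        = ‖G z‖ ^ (μ⁻¹ - 1) * ‖z * deriv G z‖ / μ := by
          rw [Real.rpow_sub_one (norm_ne_zero_iff.2 (hne z hz)), ← hnorm z hz]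
          simp only [norm_mul, norm_div, norm_real, Real.norm_of_nonneg hμ.le]
          ring
      _ ≤ 1 / 2 := by rw [div_le_iff₀ hμ]; linarith [hbound z hz]
  have hclose : ∀ z ∈ ball 0 r, ‖exp (K z) - 1‖ < 1 / 2 := by
    intro z hz
    have hr := pos_of_mem_ball hz
    calc ‖exp (K z) - 1‖ ≤ 1 / 2 / r * ‖z - 0‖ := by
          simpa [hK0] using norm_sub_le_of_norm_sub_mul_deriv_le hKd.cexp hderiv hz
      _ < 1 / 2 / r * r := by gcongr; simpa using hz
      _ = 1 / 2 := by field_simp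
  refine ⟨fun z => exp (K z), hKd.cexp, by simp [hK0], hclose, fun z hz => ?_⟩
  have hslit : ∀ z ∈ ball 0 r, exp (K z) ∈ slitPlane := fun z hz =>
    ball_one_subset_slitPlane
      (ball_subset_ball (by norm_num) (mem_ball_iff_norm.2 (hclose z hz)))
  have hlog := eqOn_log_exp_comp_of_mem_slitPlane isOpen_ball (convex_ball 0 r).isPreconnected
    hKd hslit (mem_ball_self (pos_of_mem_ball hz)) (by simp [hK0])
  rw [cpow_def_of_ne_zero (exp_ne_zero _), show log (exp (K z)) = K z from hlog hz, ← hexp z hz]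
  exact congrArg exp (div_mul_cancel₀ _ (ofReal_ne_zero.2 hμ.ne'))

theorem strongly_starlike_criterion_general (G : ℂ → ℂ)
    (hG : DifferentiableOn ℂ G (ball (0:ℂ) 1))
    (hG0 : G 0 = 1)
    (α β : ℝ) (hα : 0 ≤ α) (hβ : 0 < β) (μ : ℝ) (hμ : μ = β / (α + β))
    (hineq : ∀ z ∈ ball (0:ℂ) 1,
      ‖G z‖ ^ α * ‖z * deriv G z‖ ^ β < (μ/2 : ℝ) ^ β) :
    ∃ H : ℂ → ℂ, DifferentiableOn ℂ H (ball (0:ℂ) 1) ∧ H 0 = 1 ∧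
      (∀ z ∈ ball (0:ℂ) 1, H z ^ (μ : ℂ) = G z) ∧
      (∀ z ∈ ball (0:ℂ) 1, 0 < (H z).re) := by
  have hμ0 : 0 < μ := hμ ▸ div_pos hβ (by linarith)
  have hbound : ∀ z ∈ ball (0:ℂ) 1, ‖G z‖ ^ (μ⁻¹ - 1) * ‖z * deriv G z‖ ≤ μ / 2 := by
    have hexponent : μ⁻¹ - 1 = α / β := by rw [hμ]; field_simp; ring
    intro z hz
    rw [hexponent]
    exact (rpow_div_mul_lt_of_rpow_mul_rpow_lt (norm_nonneg _) (norm_nonneg _) (by positivity)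
      hβ (hineq z hz)).le
  have hne : ∀ z ∈ ball (0:ℂ) 1, G z ≠ 0 := by
    refine ne_zero_on_ball_of_lower_bound_on_zero_free_balls hG.continuousOn (by simp [hG0])
      (by positivity : (0:ℝ) < (1 / 2) ^ μ) fun r hr hner z hz => ?_
    have hsub := ball_subset_ball (x := (0:ℂ)) hr.le
    obtain ⟨H, -, -, hH, hHG⟩ := exists_cpow_inv_branch_of_norm_rpow_mul_deriv_le hμ0
      (hG.mono hsub) hG0 hner fun z hz => hbound z (hsub hz)
    rw [← hHG z hz, norm_cpow_real]
    have := norm_sub_norm_le 1 (H z)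
    rw [norm_one, norm_sub_rev] at this
    gcongr
    linarith [hH z hz]
  obtain ⟨H, hHd, hH0, hH, hHG⟩ :=
    exists_cpow_inv_branch_of_norm_rpow_mul_deriv_le hμ0 hG hG0 hne hbound
  refine ⟨H, hHd, hH0, hHG, fun z hz => ?_⟩
  have := (re_le_norm (1 - H z)).trans_lt ((norm_sub_rev _ _).trans_lt (hH z hz))
  simp only [sub_re, one_re] at this
  linarith

theorem strongly_starlike_criterion (f G : ℂ → ℂ)
    (hf : DifferentiableOn ℂ f (ball (0:ℂ) 1))
    (hf0 : f 0 = 0) (hf'0 : deriv f 0 = 1)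
    (hfne : ∀ z ∈ ball (0:ℂ) 1, z ≠ 0 → f z ≠ 0)
    (hG : DifferentiableOn ℂ G (ball (0:ℂ) 1))
    (hG0 : G 0 = 1)
    (hGf : ∀ z ∈ ball (0:ℂ) 1, z ≠ 0 → G z = z * deriv f z / f z)
    (α β : ℝ) (hα : 0 ≤ α) (hβ : 0 < β) (μ : ℝ) (hμ : μ = β / (α + β))
    (hineq : ∀ z ∈ ball (0:ℂ) 1,
      ‖G z‖ ^ α * ‖z * deriv G z‖ ^ β < (μ/2 : ℝ) ^ β) :
    ∃ H : ℂ → ℂ, DifferentiableOn ℂ H (ball (0:ℂ) 1) ∧ H 0 = 1 ∧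
      (∀ z ∈ ball (0:ℂ) 1, H z ^ (μ : ℂ) = G z) ∧
      (∀ z ∈ ball (0:ℂ) 1, 0 < (H z).re) :=
  strongly_starlike_criterion_general G hG hG0 α β hα hβ μ hμ hineq
end
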